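/- arXiv:2110.03189 — 2 statements merged into one kernel-verified Lean document; each statement's English description precedes it below -/
import Mathlib

section
/- For any probability vector p on [d] and any δ > 0, there exists h ∈ [d] such that h² · p_{(h)} ≥ (δ/(1+δ))^{2/(1+δ)} · (∑_{j=1}^d p_j^{(1+δ)/2})^{2/(1+δ)}. -/
open Finset Real

/-- Key step: `δ/(h+1)^{1+δ} ≤ 1/h^δ - 1/(h+1)^δ` for `h ≥ 1`. -/
lemma key_rpow_step (δ h : ℝ) (hδ : 0 < δ) (hh : 1 ≤ h) :
    δ * (h + 1) ^ (-(1 + δ)) ≤ h ^ (-δ) - (h + 1) ^ (-δ) := by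
  have h0 : (0:ℝ) < h := by linarith
  have h1 : (0:ℝ) < h + 1 := by linarith
  have hlog : 1 / (h + 1) ≤ Real.log ((h + 1) / h) := by
    have hx : (0:ℝ) < h / (h + 1) := by positivity
    have h2 := Real.log_le_sub_one_of_pos hx
    have h3 : Real.log (h / (h + 1)) = - Real.log ((h + 1) / h) := by
      rw [← Real.log_inv]
      congr 1
      field_simp
    have h4 : h / (h + 1) - 1 = -(1 / (h + 1)) := by field_simp; ring
    rw [h3, h4] at h2
    linarith
  have hexp : 1 + δ * (1 / (h + 1)) ≤ ((h + 1) / h) ^ δ := by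
    rw [Real.rpow_def_of_pos (by positivity)]
    have := Real.add_one_le_exp (Real.log ((h + 1) / h) * δ)
    have hmul : δ * (1 / (h + 1)) ≤ Real.log ((h + 1) / h) * δ := by
      rw [mul_comm]
      exact mul_le_mul_of_nonneg_right hlog hδ.le
    linarith
  -- abbreviations
  have hA : (0:ℝ) < h ^ (-δ) := Real.rpow_pos_of_pos h0 _
  have hB : (0:ℝ) < (h + 1) ^ (-δ) := Real.rpow_pos_of_pos h1 _
  have hdiv : ((h + 1) / h) ^ δ = h ^ (-δ) / (h + 1) ^ (-δ) := by
    rw [Real.div_rpow h1.le h0.le, Real.rpow_neg h0.le, Real.rpow_neg h1.le]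
    field_simp
  have hsplit : (h + 1) ^ (-(1 + δ)) = (h + 1) ^ (-δ) * (h + 1)⁻¹ := by
    rw [show -(1 + δ) = -δ + (-1) by ring, Real.rpow_add h1, Real.rpow_neg_one]
  rw [hsplit]
  rw [hdiv] at hexp
  have h5 : (1 + δ * (1 / (h + 1))) * ((h + 1) ^ (-δ)) ≤ h ^ (-δ) := by
    calc (1 + δ * (1 / (h + 1))) * ((h + 1) ^ (-δ))
        ≤ (h ^ (-δ) / (h + 1) ^ (-δ)) * ((h + 1) ^ (-δ)) := by
          exact mul_le_mul_of_nonneg_right hexp hB.le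
      _ = h ^ (-δ) := by field_simp
  have h6 : δ * (1 / (h + 1)) * ((h + 1) ^ (-δ)) = δ * ((h + 1) ^ (-δ) * (h + 1)⁻¹) := by
    field_simp
  nlinarith [hB.le]

/-- Partial sums of the `(1+δ)`-series are bounded. -/
lemma sum_inv_rpow_le_aux (δ : ℝ) (hδ : 0 < δ) (N : ℕ) :
    ∑ h ∈ Finset.range (N + 1), ((h : ℝ) + 1) ^ (-(1 + δ)) ≤
      1 + (1 - ((N : ℝ) + 1) ^ (-δ)) / δ := by
  induction N with
  | zero => simp
  | succ n ih =>
      rw [Finset.sum_range_succ]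
      have hkey := key_rpow_step δ ((n : ℝ) + 1) hδ (by have := Nat.cast_nonneg (α := ℝ) n; linarith)
      have hle : (((n : ℕ) + 1 : ℕ) : ℝ) + 1 = ((n : ℝ) + 1) + 1 := by push_cast; ring
      rw [hle]
      have h2 : (((n : ℝ) + 1) + 1) ^ (-(1 + δ)) ≤
          (((n : ℝ) + 1) ^ (-δ) - (((n : ℝ) + 1) + 1) ^ (-δ)) / δ := by
        rw [le_div_iff₀ hδ]
        linarith
      have h3 : (1 - ((n : ℝ) + 1) ^ (-δ)) / δ +
          (((n : ℝ) + 1) ^ (-δ) - (((n : ℝ) + 1) + 1) ^ (-δ)) / δ =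
          (1 - ((((n : ℝ) + 1) + 1)) ^ (-δ)) / δ := by ring
      linarith

lemma sum_inv_rpow_le (δ : ℝ) (hδ : 0 < δ) (N : ℕ) :
    ∑ h ∈ Finset.range N, ((h : ℝ) + 1) ^ (-(1 + δ)) ≤ 1 + 1 / δ := by
  rcases N with _ | n
  · simp; positivity
  · have := sum_inv_rpow_le_aux δ hδ n
    have h0 : (0:ℝ) ≤ ((n : ℝ) + 1) ^ (-δ) := Real.rpow_nonneg (by positivity) _
    have h1 : (1 - ((n : ℝ) + 1) ^ (-δ)) / δ ≤ 1 / δ :=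
      (div_le_div_iff_of_pos_right hδ).mpr (by linarith)
    linarith

/-- For any probability vector `p` on `[d]` and any `δ > 0`, there exists `h`
(`h : Fin d`, representing the index `h+1 ∈ [d]`) such that
`(h+1)² · p_{(h+1)} ≥ (δ/(1+δ))^(2/(1+δ)) · (∑ pⱼ^((1+δ)/2))^(2/(1+δ))`. -/
theorem exists_h_sq_p_h_ge_delta_norm
    (d : ℕ) (hd : 1 ≤ d) (p : Fin d → ℝ)
    (hp : ∀ j, 0 ≤ p j) (hsum : ∑ j, p j = 1)
    (σ : Equiv.Perm (Fin d)) (hsort : Antitone (fun i => p (σ i)))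
    (δ : ℝ) (hδ : 0 < δ) :
    ∃ h : Fin d, ((h : ℝ) + 1) ^ 2 * p (σ h) ≥
      (δ / (1 + δ)) ^ ((2 : ℝ) / (1 + δ)) *
        (∑ j, (p j) ^ ((1 + δ) / 2)) ^ ((2 : ℝ) / (1 + δ)) := by
  by_contra hcon
  push_neg at hcon
  have h1δ : (0:ℝ) < 1 + δ := by linarith
  set a : ℝ := (1 + δ) / 2 with ha
  have ha0 : (0:ℝ) < a := by positivity
  set S : ℝ := ∑ j, (p j) ^ a with hSdef
  -- S > 0
  have hex : ∃ j, 0 < p j := by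
    by_contra hne
    push_neg at hne
    have : ∀ j, p j = 0 := fun j => le_antisymm (hne j) (hp j)
    simp [this] at hsum
  obtain ⟨j0, hj0⟩ := hex
  have hS0 : 0 < S := by
    have hterm : 0 < (p j0) ^ a := Real.rpow_pos_of_pos hj0 _
    have := Finset.single_le_sum (f := fun j => (p j) ^ a)
      (fun i _ => Real.rpow_nonneg (hp i) a) (Finset.mem_univ j0)
    linarith
  set c : ℝ := (δ / (1 + δ)) ^ ((2 : ℝ) / (1 + δ)) with hc
  set C : ℝ := c * S ^ ((2 : ℝ) / (1 + δ)) with hC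
  have hc0 : 0 < c := Real.rpow_pos_of_pos (by positivity) _
  have hC0 : 0 < C := mul_pos hc0 (Real.rpow_pos_of_pos hS0 _)
  -- pointwise bound
  have hq : ∀ h : Fin d, (p (σ h)) ^ a < C ^ a * ((h : ℝ) + 1) ^ (-(1 + δ)) := by
    intro h
    have hh1 : (0:ℝ) < (h : ℝ) + 1 := by positivity
    have hlt : p (σ h) < C / ((h : ℝ) + 1) ^ 2 := by
      rw [lt_div_iff₀ (by positivity)]
      have := hcon h
      nlinarith
    have hmono := Real.rpow_lt_rpow (hp _) hlt ha0
    have heq : (C / ((h : ℝ) + 1) ^ 2) ^ a = C ^ a * ((h : ℝ) + 1) ^ (-(1 + δ)) := by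
      rw [Real.div_rpow hC0.le (by positivity)]
      rw [← Real.rpow_natCast ((h : ℝ) + 1) 2, ← Real.rpow_mul hh1.le]
      rw [div_eq_mul_inv, ← Real.rpow_neg hh1.le]
      congr 1
      push_cast
      rw [ha]; ring_nf
    rw [heq] at hmono
    exact hmono
  -- sum up
  have hperm : S = ∑ h : Fin d, (p (σ h)) ^ a := by
    rw [hSdef]
    exact (Equiv.sum_comp σ (fun j => (p j) ^ a)).symm
  have hne : (Finset.univ : Finset (Fin d)).Nonempty := by
    have : Nonempty (Fin d) := ⟨⟨0, hd⟩⟩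
    exact Finset.univ_nonempty
  have hlt : S < ∑ h : Fin d, C ^ a * ((h : ℝ) + 1) ^ (-(1 + δ)) := by
    rw [hperm]
    exact Finset.sum_lt_sum_of_nonempty hne (fun h _ => hq h)
  have hbound : ∑ h : Fin d, C ^ a * ((h : ℝ) + 1) ^ (-(1 + δ)) ≤ C ^ a * (1 + 1 / δ) := by
    rw [← Finset.mul_sum]
    apply mul_le_mul_of_nonneg_left _ (Real.rpow_nonneg hC0.le a)
    rw [Fin.sum_univ_eq_sum_range (fun h => ((h : ℝ) + 1) ^ (-(1 + δ))) d]
    exact sum_inv_rpow_le δ hδ d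
  -- compute C ^ a
  have hCa : C ^ a = (δ / (1 + δ)) * S := by
    rw [hC, Real.mul_rpow hc0.le (Real.rpow_nonneg hS0.le _), hc,
      ← Real.rpow_mul (by positivity : (0:ℝ) ≤ δ / (1 + δ)),
      ← Real.rpow_mul hS0.le]
    have : (2 : ℝ) / (1 + δ) * a = 1 := by
      rw [ha]; field_simp
    rw [this, Real.rpow_one, Real.rpow_one]
  have hfinal : (δ / (1 + δ)) * S * (1 + 1 / δ) = S := by
    field_simp
    ring
  have hSS : S < C ^ a * (1 + 1 / δ) := lt_of_lt_of_le hlt hbound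
  rw [hCa] at hSS
  linarith
end

section
/- For reals p ≥ ε > 0 and p̂ ≥ 0, if |p̂ - p| ≤ √(ε p), then |p̂^{1/3} - p^{1/3}| ≤ ε^{1/3}. -/
/-!
With `a`, `b`, `e` the cube roots of `p̂`, `p`, `ε`, the hypothesis reads
`|a³ - b³| ≤ √(e³ b³) ≤ e b²` (as `e ≤ b`), while `a³ - b³ = (a - b)(a² + ab + b²)` with
`a² + ab + b² ≥ b² > 0`; dividing by `b²` gives `|a - b| ≤ e`.
-/

open Real

lemma rpow_one_div_three_pow_three {x : ℝ} (hx : 0 ≤ x) : (x ^ ((1 : ℝ) / 3)) ^ 3 = x := by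
  rw [one_div]
  exact_mod_cast Real.rpow_inv_natCast_pow hx three_ne_zero

lemma abs_sub_mul_sq_le_abs_pow_three_sub_pow_three {R : Type*} [CommRing R] [LinearOrder R]
    [IsStrictOrderedRing R] {a b : R} (ha : 0 ≤ a) (hb : 0 ≤ b) :
    |a - b| * b ^ 2 ≤ |a ^ 3 - b ^ 3| := by
  have hfactor : a ^ 3 - b ^ 3 = (a - b) * (a ^ 2 + a * b + b ^ 2) := by ring
  have hsq : b ^ 2 ≤ a ^ 2 + a * b + b ^ 2 := by nlinarith [mul_nonneg ha hb]
  rw [hfactor, abs_mul, abs_of_nonneg ((sq_nonneg b).trans hsq)]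
  exact mul_le_mul_of_nonneg_left hsq (abs_nonneg _)

lemma sqrt_pow_three_mul_pow_three_le {e b : ℝ} (he : 0 ≤ e) (heb : e ≤ b) :
    √(e ^ 3 * b ^ 3) ≤ e * b ^ 2 := by
  have hb : 0 ≤ b := he.trans heb
  rw [Real.sqrt_le_iff]
  refine ⟨by positivity, ?_⟩
  calc e ^ 3 * b ^ 3 = e ^ 2 * b ^ 3 * e := by ring
    _ ≤ e ^ 2 * b ^ 3 * b := by gcongr
    _ = (e * b ^ 2) ^ 2 := by ring

lemma abs_sub_le_of_abs_pow_three_sub_le {a b e : ℝ} (ha : 0 ≤ a) (he : 0 < e) (heb : e ≤ b)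
    (h : |a ^ 3 - b ^ 3| ≤ √(e ^ 3 * b ^ 3)) : |a - b| ≤ e := by
  have hb : 0 < b := he.trans_le heb
  refine le_of_mul_le_mul_right ?_ (pow_pos hb 2)
  calc |a - b| * b ^ 2 ≤ |a ^ 3 - b ^ 3| := abs_sub_mul_sq_le_abs_pow_three_sub_pow_three ha hb.le
    _ ≤ √(e ^ 3 * b ^ 3) := h
    _ ≤ e * b ^ 2 := sqrt_pow_three_mul_pow_three_le he.le heb

/-- If `ε > 0`, `p ≥ ε`, `p̂ ≥ 0` and `|p̂ - p| ≤ √(ε p)`, then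
`|p̂^{1/3} - p^{1/3}| ≤ ε^{1/3}`. -/
theorem cbrt_estimate_error (p phat ε : ℝ) (hε : 0 < ε) (hp : ε ≤ p)
    (hphat : 0 ≤ phat) (h : |phat - p| ≤ Real.sqrt (ε * p)) :
    |phat ^ ((1 : ℝ) / 3) - p ^ ((1 : ℝ) / 3)| ≤ ε ^ ((1 : ℝ) / 3) := by
  have hp0 : 0 ≤ p := hε.le.trans hp
  apply abs_sub_le_of_abs_pow_three_sub_le (rpow_nonneg hphat _) (rpow_pos_of_pos hε _)
    (rpow_le_rpow hε.le hp (by norm_num))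
  rwa [rpow_one_div_three_pow_three hphat, rpow_one_div_three_pow_three hp0,
    rpow_one_div_three_pow_three hε.le]
end
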